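/- arXiv:2311.08912 — 4 statements merged into one kernel-verified Lean document; each statement's English description precedes it below -/
import Mathlib

section
/- Let n ≥ 1 be an integer and m > 0, g > 0. Define C₀ = 1 and, for 1 ≤ k ≤ n, C_k = (−1)^k − Σ_{ℓ=0}^{k−1} (−1)^{k−ℓ} · binom(2n−2ℓ, k−ℓ) · C_ℓ. Let V : ℝ² \ {(0,0)} → ℝ be V(q₁,q₂) = −m/√(q₁²+q₂²) − g · Σ_{k=0}^{n} (C_k/4^k) · q₁^(2n−2k) q₂^(2k). Assume that D_k := 4·C_k·(n−k) − C_{k+1}·(k+1) > 0 for every k with 0 ≤ k ≤ n−1. Then the set of critical points of V is exactly the four points (±(m/(2ng))^(1/(2n+1)), 0) and (0, ±(2^(2n−1)·m/(n·g))^(1/(2n+1))); moreover the value of V at the critical points on the q₁-axis equals E₁ = −(2n+1)·(m/(2n))^(2n/(2n+1))·g^(1/(2n+1)), and the value at the critical points on the q₂-axis equals E₂ = −(2n+1)·(m/(4n))^(2n/(2n+1))·g^(1/(2n+1)). -/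
open Set Finset
open Finset Polynomial

noncomputable def Tp (m l : ℕ) : Polynomial ℝ :=
  Polynomial.C ((-1:ℝ)^l * (Nat.choose (m-l) l : ℝ)) * Polynomial.X ^ l * (1 + Polynomial.X)^(m - 2*l)

noncomputable def Gp (m : ℕ) : Polynomial ℝ := ∑ l ∈ range (m+1), Tp m l

lemma Tp_zero {m l : ℕ} (h : m < 2*l) : Tp m l = 0 := by
  have : m - l < l := by omega
  simp [Tp, Nat.choose_eq_zero_of_lt this]

lemma choose_split (m j : ℕ) :
    Nat.choose (m+1-j) (j+1) = Nat.choose (m-j) (j+1) + Nat.choose (m-j) j := by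
  rcases le_or_gt j m with h | h
  · have : m + 1 - j = (m - j) + 1 := by omega
    rw [this, Nat.choose_succ_succ', Nat.add_comm]
  · have h2 : m - j = 0 := by omega
    have h3 : m + 1 - j = 0 := by omega
    rw [h2, h3, Nat.choose_eq_zero_of_lt (show 0 < j by omega)]
    simp

lemma Gp_rec (m : ℕ) : Gp (m+2) = (1 + X) * Gp (m+1) - X * Gp m := by
  have hT0 : Tp (m+2) 0 = (1+X) * Tp (m+1) 0 := by
    simp [Tp, pow_succ]; ring
  have hTs : ∀ j, Tp (m+2) (j+1) = (1+X) * Tp (m+1) (j+1) - X * Tp m j := by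
    intro j
    unfold Tp
    have e1 : m + 2 - (j+1) = m + 1 - j := by omega
    have e7 : m + 1 - (j+1) = m - j := by omega
    rw [e1, e7, choose_split]
    rcases le_or_gt (2*(j+1)) (m+1) with h | h
    · have e2 : m + 2 - 2*(j+1) = (m + 1 - 2*(j+1)) + 1 := by omega
      have e5 : m - 2*j = (m + 1 - 2*(j+1)) + 1 := by omega
      rw [e2, e5]
      simp only [Nat.cast_add, mul_add, C_add, C_mul, C_pow, C_neg, C_1, pow_succ]
      ring
    · have hz : Nat.choose (m-j) (j+1) = 0 := Nat.choose_eq_zero_of_lt (by omega)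
      have e4 : m + 1 - 2*(j+1) = 0 := by omega
      have e6 : m - 2*j = 0 := by omega
      have e2 : m + 2 - 2*(j+1) = 0 := by omega
      rw [hz, e2, e4, e6]
      simp only [Nat.cast_add, Nat.cast_zero, mul_add, C_add, C_mul, C_pow, C_neg, C_1, pow_zero,
        mul_zero, C_0, zero_mul, zero_add]
      ring
  calc Gp (m+2) = ∑ j ∈ range (m+2), Tp (m+2) (j+1) + Tp (m+2) 0 := Finset.sum_range_succ' _ _
    _ = (∑ j ∈ range (m+2), ((1+X) * Tp (m+1) (j+1) - X * Tp m j)) + (1+X) * Tp (m+1) 0 := by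
        rw [hT0]; exact congrArg₂ _ (Finset.sum_congr rfl fun j _ => hTs j) rfl
    _ = ((1+X) * (∑ j ∈ range (m+2), Tp (m+1) (j+1) + Tp (m+1) 0))
        - X * ∑ j ∈ range (m+2), Tp m j := by
        rw [Finset.sum_sub_distrib, ← Finset.mul_sum, ← Finset.mul_sum]; ring
    _ = (1 + X) * Gp (m+1) - X * Gp m := by
        rw [← Finset.sum_range_succ' (fun l => Tp (m+1) l) (m+2)]
        have h1 : ∑ l ∈ range (m+3), Tp (m+1) l = Gp (m+1) := by
          rw [Finset.sum_range_succ, Tp_zero (by omega)]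
          simp [Gp]
        have h2 : ∑ j ∈ range (m+2), Tp m j = Gp m := by
          rw [Finset.sum_range_succ, Tp_zero (by omega)]
          simp [Gp]
        rw [h1, h2]

lemma Gp_val (m : ℕ) : Gp m = ∑ j ∈ range (m+1), X^j := by
  induction m using Nat.strong_induction_on with
  | _ m ih =>
    match m with
    | 0 => simp [Gp, Tp]
    | 1 =>
      rw [Gp, Finset.sum_range_succ, Finset.sum_range_one, Tp_zero (m := 1) (l := 1) (by omega)]
      simp [Tp, Finset.sum_range_succ]
    | (m+2) =>
      rw [Gp_rec, ih (m+1) (by omega), ih m (by omega)]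
      rw [Finset.sum_range_succ (fun j => (X:Polynomial ℝ)^j) (m+2)]
      rw [Finset.sum_range_succ (fun j => (X:Polynomial ℝ)^j) (m+1)]
      ring

lemma Tp_coeff (m l k : ℕ) :
    (Tp m l).coeff k = if l ≤ k then (-1:ℝ)^l * (Nat.choose (m-l) l : ℝ) *
      (Nat.choose (m-2*l) (k-l) : ℝ) else 0 := by
  have : Tp m l = Polynomial.C ((-1:ℝ)^l * (Nat.choose (m-l) l : ℝ)) *
      ((1 + Polynomial.X)^(m - 2*l) * Polynomial.X ^ l) := by
    rw [Tp]; ring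
  rw [this, Polynomial.coeff_C_mul, Polynomial.coeff_mul_X_pow']
  by_cases h : l ≤ k
  · simp only [if_pos h, Polynomial.coeff_one_add_X_pow, mul_assoc]
  · simp [if_neg h]

lemma comb_sum (n k : ℕ) (hk : k ≤ 2*n) :
    ∑ l ∈ range (k+1), (-1:ℝ)^l * (Nat.choose (2*n-l) l : ℝ) *
      (Nat.choose (2*n-2*l) (k-l) : ℝ) = 1 := by
  have h := congrArg (fun p => Polynomial.coeff p k) (Gp_val (2*n))
  simp only [Gp, Polynomial.finset_sum_coeff] at h
  have hR : ∑ j ∈ range (2*n+1), (Polynomial.X ^ j : Polynomial ℝ).coeff k = 1 := by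
    simp only [Polynomial.coeff_X_pow]
    rw [Finset.sum_ite_eq (range (2*n+1)) k (fun _ => (1:ℝ))]
    simp [Nat.lt_succ_iff, hk]
  rw [hR] at h
  have hL : ∑ l ∈ range (2*n+1), (Tp (2*n) l).coeff k
      = ∑ l ∈ range (k+1), (-1:ℝ)^l * (Nat.choose (2*n-l) l : ℝ) *
        (Nat.choose (2*n-2*l) (k-l) : ℝ) := by
    rw [← Finset.sum_subset (Finset.range_subset_range.mpr (by omega) :
        range (k+1) ⊆ range (2*n+1))]
    · exact Finset.sum_congr rfl fun l hl => by
        rw [Tp_coeff]; simp [Nat.lt_succ_iff.mp (Finset.mem_range.mp hl)]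
    · intro l hlm hl
      have hlk : k < l := by
        by_contra hc
        exact hl (Finset.mem_range.mpr (by omega))
      rw [Tp_coeff, if_neg (by omega)]
  rw [hL] at h
  exact h

lemma C_closed (n : ℕ) (C : ℕ → ℝ) (hC0 : C 0 = 1)
    (hC : ∀ k : ℕ, 1 ≤ k → k ≤ n →
      C k = (-1 : ℝ) ^ k - ∑ ℓ ∈ Finset.range k,
        (-1 : ℝ) ^ (k - ℓ) * (Nat.choose (2 * n - 2 * ℓ) (k - ℓ) : ℝ) * C ℓ) :
    ∀ k, k ≤ n → C k = (Nat.choose (2*n - k) k : ℝ) := by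
  intro k hk
  induction k using Nat.strong_induction_on with
  | _ k ih =>
    match k with
    | 0 => simpa using hC0
    | (k+1) =>
      have hk1 : k + 1 ≤ n := hk
      have hcs := comb_sum n (k+1) (by omega)
      rw [Finset.sum_range_succ] at hcs
      have hsum : ∀ l ∈ range (k+1),
          (-1:ℝ)^l * (Nat.choose (2*n-l) l : ℝ) * (Nat.choose (2*n-2*l) (k+1-l) : ℝ)
          = (-1:ℝ)^l * ((Nat.choose (2*n-2*l) (k+1-l) : ℝ) * C l) := by
        intro l hl
        have hl' : l < k + 1 := Finset.mem_range.mp hl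
        rw [ih l hl' (by omega)]; ring
      rw [Finset.sum_congr rfl hsum] at hcs
      simp only [Nat.sub_self, Nat.choose_zero_right, Nat.cast_one, mul_one] at hcs
      -- hcs : ∑ l ∈ range (k+1), (-1)^l * (choose (2n-2l) (k+1-l) * C l)
      --        + (-1)^(k+1) * choose (2n-(k+1)) (k+1) = 1
      rw [hC (k+1) (by omega) hk1]
      have hpow : ∀ l, l ∈ range (k+1) → (-1:ℝ)^(k+1-l) * (Nat.choose (2*n-2*l) (k+1-l) : ℝ) * C l
          = (-1:ℝ)^(k+1) * ((-1:ℝ)^l * ((Nat.choose (2*n-2*l) (k+1-l) : ℝ) * C l)) := by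
        intro l hl
        have hl' : l < k + 1 := Finset.mem_range.mp hl
        have e : k + 1 + l = (k + 1 - l) + 2 * l := by omega
        have hh : (-1:ℝ)^(k+1) * (-1:ℝ)^l = (-1:ℝ)^(k+1-l) := by
          rw [← pow_add, e, pow_add, pow_mul]; norm_num
        rw [← hh]; ring
      rw [Finset.sum_congr rfl hpow, ← Finset.mul_sum]
      have h1 : ∑ l ∈ range (k+1), (-1:ℝ)^l * ((Nat.choose (2*n-2*l) (k+1-l) : ℝ) * C l)
          = 1 - (-1:ℝ)^(k+1) * (Nat.choose (2*n-(k+1)) (k+1) : ℝ) := by linarith [hcs]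
      rw [h1]
      have hsq : (-1:ℝ)^(k+1) * (-1:ℝ)^(k+1) = 1 := by
        rw [← pow_add]; exact Even.neg_one_pow ⟨k+1, rfl⟩
      linear_combination ((Nat.choose (2*n-(k+1)) (k+1) : ℝ)) * hsq


noncomputable def pd1 (m g : ℝ) (n : ℕ) (c : ℕ → ℝ) (q : ℝ × ℝ) : ℝ :=
  m * q.1 / ((q.1^2 + q.2^2) * Real.sqrt (q.1^2 + q.2^2)) -
    g * ∑ k ∈ range (n+1), c k * ((2*n-2*k : ℕ) : ℝ) * q.1^(2*n-2*k-1) * q.2^(2*k)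

noncomputable def pd2 (m g : ℝ) (n : ℕ) (c : ℕ → ℝ) (q : ℝ × ℝ) : ℝ :=
  m * q.2 / ((q.1^2 + q.2^2) * Real.sqrt (q.1^2 + q.2^2)) -
    g * ∑ k ∈ range (n+1), c k * q.1^(2*n-2*k) * ((2*k : ℕ) : ℝ) * q.2^(2*k-1)

lemma r2_pos {q : ℝ × ℝ} (hq : q ≠ 0) : 0 < q.1^2 + q.2^2 := by
  have h : q.1 ≠ 0 ∨ q.2 ≠ 0 := by
    by_contra h; push_neg at h
    exact hq (Prod.ext h.1 h.2)
  rcases h with h | h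
  · have : 0 < q.1^2 := by positivity
    nlinarith [sq_nonneg q.2]
  · have : 0 < q.2^2 := by positivity
    nlinarith [sq_nonneg q.1]

lemma hasfd (m g : ℝ) (n : ℕ) (c : ℕ → ℝ) (q : ℝ × ℝ) (hq : q ≠ 0) :
    HasFDerivAt (fun p : ℝ × ℝ => -m / Real.sqrt (p.1^2 + p.2^2) -
        g * ∑ k ∈ range (n+1), c k * p.1^(2*n-2*k) * p.2^(2*k))
      ((pd1 m g n c q) • ContinuousLinearMap.fst ℝ ℝ ℝ +
        (pd2 m g n c q) • ContinuousLinearMap.snd ℝ ℝ ℝ) q := by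
  have hpos : 0 < q.1^2 + q.2^2 := r2_pos hq
  have hs : Real.sqrt (q.1^2 + q.2^2) ≠ 0 := ne_of_gt (Real.sqrt_pos.mpr hpos)
  have hr2 : HasFDerivAt (fun p : ℝ × ℝ => p.1^2 + p.2^2)
      ((((2:ℕ):ℝ) * q.1^(2-1)) • ContinuousLinearMap.fst ℝ ℝ ℝ +
        (((2:ℕ):ℝ) * q.2^(2-1)) • ContinuousLinearMap.snd ℝ ℝ ℝ) q :=
    ((hasDerivAt_pow 2 q.1).comp_hasFDerivAt q hasFDerivAt_fst).add
      ((hasDerivAt_pow 2 q.2).comp_hasFDerivAt q hasFDerivAt_snd)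
  have hsqrt := (Real.hasDerivAt_sqrt hpos.ne').comp_hasFDerivAt q hr2
  have hinv := (hasDerivAt_inv hs).comp_hasFDerivAt q hsqrt
  have hA := hinv.const_mul (-m)
  have hterm : ∀ k ∈ range (n+1), HasFDerivAt
      (fun p : ℝ × ℝ => c k * p.1^(2*n-2*k) * p.2^(2*k))
      ((c k * q.1^(2*n-2*k)) • ((((2*k : ℕ)):ℝ) * q.2^(2*k-1)) •
          ContinuousLinearMap.snd ℝ ℝ ℝ +
        (q.2^(2*k)) • ((c k) • ((((2*n-2*k : ℕ)):ℝ) * q.1^(2*n-2*k-1)) •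
          ContinuousLinearMap.fst ℝ ℝ ℝ)) q := by
    intro k _
    exact (((hasDerivAt_pow (2*n-2*k) q.1).comp_hasFDerivAt q hasFDerivAt_fst).const_mul
        (c k)).mul ((hasDerivAt_pow (2*k) q.2).comp_hasFDerivAt q hasFDerivAt_snd)
  have hP := (HasFDerivAt.sum hterm).const_mul g
  have hVW := hA.sub hP
  have hfun : (fun p : ℝ × ℝ => -m / Real.sqrt (p.1^2 + p.2^2) -
      g * ∑ k ∈ range (n+1), c k * p.1^(2*n-2*k) * p.2^(2*k)) =
      (fun p : ℝ × ℝ => -m * (Real.sqrt (p.1^2 + p.2^2))⁻¹ -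
      g * ∑ k ∈ range (n+1), c k * p.1^(2*n-2*k) * p.2^(2*k)) := by
    funext p; rw [div_eq_mul_inv]
  rw [hfun]
  refine (hVW.congr_of_eventuallyEq (Filter.Eventually.of_forall fun p => by
    simp [Finset.sum_apply])).congr_fderiv ?_
  symm
  apply ContinuousLinearMap.ext
  intro v
  simp only [ContinuousLinearMap.add_apply, ContinuousLinearMap.smul_apply,
    ContinuousLinearMap.coe_fst', ContinuousLinearMap.coe_snd',
    ContinuousLinearMap.sub_apply, ContinuousLinearMap.sum_apply, smul_eq_mul]
  rw [Real.sq_sqrt hpos.le]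
  have hsum : ∑ x ∈ range (n+1), (c x * q.1^(2*n-2*x) * (((2*x:ℕ):ℝ) * q.2^(2*x-1) * v.2) +
        q.2^(2*x) * (c x * (((2*n-2*x:ℕ):ℝ) * q.1^(2*n-2*x-1) * v.1)))
      = (∑ k ∈ range (n+1), c k * ((2*n-2*k:ℕ):ℝ) * q.1^(2*n-2*k-1) * q.2^(2*k)) * v.1
      + (∑ k ∈ range (n+1), c k * q.1^(2*n-2*k) * ((2*k:ℕ):ℝ) * q.2^(2*k-1)) * v.2 := by
    rw [Finset.sum_add_distrib, Finset.sum_mul, Finset.sum_mul, add_comm]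
    congr 1 <;> exact Finset.sum_congr rfl fun k _ => by ring
  rw [hsum]
  simp only [pd1, pd2]
  field_simp
  ring

lemma pd2_axis1 (m g : ℝ) (n : ℕ) (c : ℕ → ℝ) (t : ℝ) : pd2 m g n c (t, 0) = 0 := by
  have hz : ∀ k ∈ range (n+1), c k * t^(2*n-2*k) * ((2*k : ℕ):ℝ) * (0:ℝ)^(2*k-1) = 0 := by
    intro k _
    cases k with
    | zero => simp
    | succ j => rw [zero_pow (by omega)]; ring
  simp only [pd2]
  rw [Finset.sum_eq_zero hz]
  simp

lemma pd1_axis2 (m g : ℝ) (n : ℕ) (c : ℕ → ℝ) (hn : 1 ≤ n) (t : ℝ) :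
    pd1 m g n c (0, t) = 0 := by
  have hz : ∀ k ∈ range (n+1), c k * ((2*n-2*k : ℕ):ℝ) * (0:ℝ)^(2*n-2*k-1) * t^(2*k) = 0 := by
    intro k hk
    have hk' : k ≤ n := by have := Finset.mem_range.mp hk; omega
    rcases eq_or_lt_of_le hk' with rfl | h
    · simp
    · rw [zero_pow (by omega)]; ring
  simp only [pd1]
  rw [Finset.sum_eq_zero hz]
  simp

lemma pd1_axis1 (m g : ℝ) (n : ℕ) (c : ℕ → ℝ) (t : ℝ) :
    pd1 m g n c (t, 0) = m * t / ((t^2) * Real.sqrt (t^2)) -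
      g * (c 0 * ((2*n : ℕ):ℝ) * t^(2*n-1)) := by
  have hz : ∑ k ∈ range (n+1), c k * ((2*n-2*k:ℕ):ℝ) * t^(2*n-2*k-1) * (0:ℝ)^(2*k)
      = c 0 * ((2*n:ℕ):ℝ) * t^(2*n-1) := by
    rw [Finset.sum_eq_single 0]
    · simp
    · intro k _ hk
      rw [zero_pow (by omega)]; ring
    · intro h; exact absurd (Finset.mem_range.mpr (by omega)) h
  simp only [pd1]
  rw [hz]
  norm_num

lemma pd2_axis2 (m g : ℝ) (n : ℕ) (c : ℕ → ℝ) (t : ℝ) :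
    pd2 m g n c (0, t) = m * t / ((t^2) * Real.sqrt (t^2)) -
      g * (c n * ((2*n : ℕ):ℝ) * t^(2*n-1)) := by
  have hz : ∑ k ∈ range (n+1), c k * (0:ℝ)^(2*n-2*k) * ((2*k:ℕ):ℝ) * t^(2*k-1)
      = c n * ((2*n:ℕ):ℝ) * t^(2*n-1) := by
    rw [Finset.sum_eq_single n]
    · rw [Nat.sub_self, pow_zero]; ring
    · intro k hk hkn
      have : k < n := by have := Finset.mem_range.mp hk; omega
      rw [zero_pow (by omega)]; ring
    · intro h; exact absurd (Finset.mem_range.mpr (by omega)) h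
  simp only [pd2]
  rw [hz]
  norm_num

lemma pos_core (N : ℕ) (hN : 1 ≤ N) (M K u : ℝ) (hM : 0 < M) (hK : 0 < K) (hu : 0 < u) :
    M / u^2 = K * u^(2*N-1) ↔ u = (M/K) ^ ((1:ℝ)/(2*(N:ℝ)+1)) := by
  have hMK : 0 < M / K := div_pos hM hK
  have hcast : ((2*N+1 : ℕ) : ℝ) = 2*(N:ℝ)+1 := by push_cast; ring
  have hne : (2*(N:ℝ)+1) ≠ 0 := by positivity
  have hsplit : u^(2*N+1) = u^(2*N-1) * u^2 := by
    rw [← pow_add]; congr 1; omega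
  constructor
  · intro h
    have h5 : u ^ (2*N+1) = M / K := by
      have hM' : M = K * u^(2*N-1) * u^2 := by
        field_simp at h; linarith
      rw [hsplit, hM']
      field_simp
    have h6 : u = (u ^ (2*N+1 : ℕ)) ^ ((1:ℝ)/(2*(N:ℝ)+1)) := by
      rw [← Real.rpow_natCast u (2*N+1), ← Real.rpow_mul hu.le, hcast,
        mul_one_div, div_self hne, Real.rpow_one]
    rw [h6, h5]
  · intro h
    have h7 : u ^ (2*N+1) = M / K := by
      rw [h, ← Real.rpow_natCast ((M/K) ^ ((1:ℝ)/(2*(N:ℝ)+1))) (2*N+1),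
        ← Real.rpow_mul hMK.le, hcast, one_div_mul_cancel hne, Real.rpow_one]
    rw [hsplit] at h7
    have h8 : M = K * (u^(2*N-1) * u^2) := by
      rw [h7]; field_simp
    rw [h8]; field_simp

lemma solve_eq (N : ℕ) (hN : 1 ≤ N) (M K t : ℝ) (hM : 0 < M) (hK : 0 < K) (ht : t ≠ 0) :
    (M * t / ((t^2) * Real.sqrt (t^2)) - K * t^(2*N-1) = 0) ↔
      |t| = (M/K) ^ ((1:ℝ)/(2*(N:ℝ)+1)) := by
  rw [Real.sqrt_sq_eq_abs, sub_eq_zero]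
  have key : ∀ u : ℝ, 0 < u → (M * u / (u^2 * u) = K * u^(2*N-1) ↔ M/u^2 = K * u^(2*N-1)) := by
    intro u hu
    have h : M * u / (u^2 * u) = M / u^2 := by
      rw [div_eq_div_iff (by positivity) (by positivity)]; ring
    rw [h]
  rcases ht.lt_or_gt with hlt | hgt
  · rw [abs_of_neg hlt]
    have hu : 0 < -t := by linarith
    have e : M * t / (t^2 * -t) = -(M * (-t) / ((-t)^2 * (-t))) := by ring
    have e2 : K * t^(2*N-1) = -(K * (-t)^(2*N-1)) := by
      have h9 : (2*N-1) = 2*(N-1)+1 := by omega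
      have h10 : (-t)^(2*(N-1)+1) = -(t^(2*(N-1)+1)) := by
        rw [pow_succ, pow_succ, pow_mul, pow_mul, neg_sq]; ring
      rw [h9, h10]; ring
    rw [e, e2, neg_inj, key (-t) hu, pos_core N hN M K (-t) hM hK hu]
  · rw [abs_of_pos hgt, key t hgt, pos_core N hN M K t hM hK hgt]

lemma val_aux (N : ℕ) (hN : 1 ≤ N) (m g w : ℝ) (hm : 0 < m) (hg : 0 < g) (hw : 0 < w) :
    -- general: base A = w*m/(2Ng), weight g/w on the power term
    -m / ((w*m/(2*(N:ℝ)*g)) ^ ((1:ℝ)/(2*(N:ℝ)+1))) -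
      (g/w) * (((w*m/(2*(N:ℝ)*g)) ^ ((1:ℝ)/(2*(N:ℝ)+1)))^(2*N)) =
    -(2*(N:ℝ)+1) * ((g/w) * ((w*m/(2*(N:ℝ)*g)) ^ ((2*(N:ℝ))/(2*(N:ℝ)+1)))) := by
  have hN' : (1:ℝ) ≤ (N:ℝ) := by exact_mod_cast hN
  have h2N : (0:ℝ) < 2*(N:ℝ) := by linarith
  have h21 : (0:ℝ) < 2*(N:ℝ)+1 := by linarith
  set s : ℝ := (1:ℝ)/(2*(N:ℝ)+1) with hs
  set t : ℝ := (2*(N:ℝ))/(2*(N:ℝ)+1) with htdef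
  have hA : 0 < w*m/(2*(N:ℝ)*g) := by positivity
  set A : ℝ := w*m/(2*(N:ℝ)*g) with hAdef
  have hts : t = 1 - s := by rw [hs, htdef]; field_simp; ring
  have epow : (A ^ s)^(2*N) = A ^ t := by
    rw [← Real.rpow_natCast (A^s) (2*N), ← Real.rpow_mul hA.le]
    congr 1
    rw [hs, htdef]; push_cast; ring
  have ediv : m / A ^ s = (2*(N:ℝ)*g/w) * A ^ t := by
    rw [hts, Real.rpow_sub hA, Real.rpow_one]
    have hAs : A^s ≠ 0 := (Real.rpow_pos_of_pos hA s).ne'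
    rw [hAdef]
    field_simp
  rw [neg_div, ediv, epow]
  ring

lemma gAt (N : ℕ) (hN : 1 ≤ N) (m g w : ℝ) (hm : 0 < m) (hg : 0 < g) (hw : 0 < w) :
    (g/w) * ((w*m/(2*(N:ℝ)*g)) ^ ((2*(N:ℝ))/(2*(N:ℝ)+1))) =
      (w^((2*(N:ℝ))/(2*(N:ℝ)+1)) / w) * (m/(2*(N:ℝ))) ^ ((2*(N:ℝ))/(2*(N:ℝ)+1)) *
        g ^ ((1:ℝ)/(2*(N:ℝ)+1)) := by
  have hN' : (1:ℝ) ≤ (N:ℝ) := by exact_mod_cast hN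
  have h2N : (0:ℝ) < 2*(N:ℝ) := by linarith
  have h21 : (0:ℝ) < 2*(N:ℝ)+1 := by linarith
  set s : ℝ := (1:ℝ)/(2*(N:ℝ)+1) with hs
  set t : ℝ := (2*(N:ℝ))/(2*(N:ℝ)+1) with htdef
  have hts : t = 1 - s := by rw [hs, htdef]; field_simp; ring
  have e1 : (w*m/(2*(N:ℝ)*g)) = (w * (m/(2*(N:ℝ)))) / g := by field_simp
  rw [e1, Real.div_rpow (by positivity) hg.le, Real.mul_rpow hw.le (by positivity)]
  have e2 : g / w * (w^t * (m/(2*(N:ℝ)))^t / g^t) =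
      (w^t/w) * (m/(2*(N:ℝ)))^t * (g/g^t) := by ring
  rw [e2]
  have e3 : g / g^t = g^s := by
    rw [hts, Real.rpow_sub hg, Real.rpow_one]
    field_simp
  rw [e3]

lemma val1 (n : ℕ) (hn : 1 ≤ n) (m g : ℝ) (hm : 0 < m) (hg : 0 < g) :
    -m / ((m/(2*(n:ℝ)*g)) ^ ((1:ℝ)/(2*(n:ℝ)+1))) -
      g * ((m/(2*(n:ℝ)*g)) ^ ((1:ℝ)/(2*(n:ℝ)+1)))^(2*n)
    = -(2*(n:ℝ)+1) * (m/(2*(n:ℝ))) ^ ((2*(n:ℝ))/(2*(n:ℝ)+1)) * g ^ ((1:ℝ)/(2*(n:ℝ)+1)) := by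
  have h := val_aux n hn m g 1 hm hg one_pos
  have h2 := gAt n hn m g 1 hm hg one_pos
  simp only [one_mul, div_one, Real.one_rpow] at h h2
  rw [h, h2]; ring

lemma wfac (n : ℕ) (hn : 1 ≤ n) (m : ℝ) (hm : 0 < m) :
    (((4:ℝ)^n) ^ ((2*(n:ℝ))/(2*(n:ℝ)+1)) / 4^n) * (m/(2*(n:ℝ))) ^ ((2*(n:ℝ))/(2*(n:ℝ)+1))
    = (m/(4*(n:ℝ))) ^ ((2*(n:ℝ))/(2*(n:ℝ)+1)) := by
  have hn' : (1:ℝ) ≤ (n:ℝ) := by exact_mod_cast hn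
  have h21 : (2*(n:ℝ)+1) ≠ 0 := by positivity
  have e1 : ((4:ℝ)^n)^((2*(n:ℝ))/(2*(n:ℝ)+1)) / (4:ℝ)^n
      = (2:ℝ)^(-((2*(n:ℝ))/(2*(n:ℝ)+1))) := by
    have h4 : ((4:ℝ))^n = (2:ℝ)^(((2*n : ℕ)):ℝ) := by
      rw [Real.rpow_natCast, pow_mul]; norm_num
    rw [h4, ← Real.rpow_mul (by norm_num : (0:ℝ) ≤ 2), ← Real.rpow_sub (by norm_num : (0:ℝ) < 2)]
    congr 1
    push_cast
    field_simp
    ring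
  have e2 : (m/(4*(n:ℝ))) = (m/(2*(n:ℝ))) * (2:ℝ)⁻¹ := by
    have hn0 : (n:ℝ) ≠ 0 := by linarith
    field_simp
    try ring
    try tauto
  rw [e2, Real.mul_rpow (by positivity) (by norm_num), e1,
    Real.inv_rpow (by norm_num : (0:ℝ) ≤ 2), ← Real.rpow_neg (by norm_num : (0:ℝ) ≤ 2)]
  ring

lemma val2 (n : ℕ) (hn : 1 ≤ n) (m g : ℝ) (hm : 0 < m) (hg : 0 < g) :
    -m / (((2:ℝ)^(2*n-1)*m/((n:ℝ)*g)) ^ ((1:ℝ)/(2*(n:ℝ)+1))) -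
      (g/4^n) * (((2:ℝ)^(2*n-1)*m/((n:ℝ)*g)) ^ ((1:ℝ)/(2*(n:ℝ)+1)))^(2*n)
    = -(2*(n:ℝ)+1) * (m/(4*(n:ℝ))) ^ ((2*(n:ℝ))/(2*(n:ℝ)+1)) * g ^ ((1:ℝ)/(2*(n:ℝ)+1)) := by
  have hn' : (1:ℝ) ≤ (n:ℝ) := by exact_mod_cast hn
  have hn0 : (n:ℝ) ≠ 0 := by linarith
  have hbase : (2:ℝ)^(2*n-1)*m/((n:ℝ)*g) = (4:ℝ)^n * m / (2*(n:ℝ)*g) := by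
    have h1 : (4:ℝ)^n = 2^(2*n-1) * 2 := by
      rw [← pow_succ]
      have h2 : 2*n-1+1 = 2*n := by omega
      rw [h2, pow_mul]; norm_num
    rw [h1]
    field_simp
  rw [hbase]
  have h := val_aux n hn m g (4^n) hm hg (by positivity)
  rw [h, gAt n hn m g (4^n) hm hg (by positivity)]
  rw [show ((4:ℝ)^n) ^ ((2*(n:ℝ))/(2*(n:ℝ)+1)) / 4^n * (m/(2*(n:ℝ))) ^ ((2*(n:ℝ))/(2*(n:ℝ)+1)) *
      g ^ ((1:ℝ)/(2*(n:ℝ)+1)) = (((4:ℝ)^n) ^ ((2*(n:ℝ))/(2*(n:ℝ)+1)) / 4^n *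
      (m/(2*(n:ℝ))) ^ ((2*(n:ℝ))/(2*(n:ℝ)+1))) * g ^ ((1:ℝ)/(2*(n:ℝ)+1)) from by ring,
    wfac n hn m hm]
  ring

lemma offaxis (n : ℕ) (hn : 1 ≤ n) (m g : ℝ) (hg : 0 < g) (C : ℕ → ℝ)
    (hD : ∀ k : ℕ, k ≤ n - 1 → 0 < 4*C k*((n:ℝ)-(k:ℝ)) - C (k+1)*((k:ℝ)+1))
    (q : ℝ × ℝ) (h1 : q.1 ≠ 0) (h2 : q.2 ≠ 0)
    (hp1 : pd1 m g n (fun k => C k / 4^k) q = 0)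
    (hp2 : pd2 m g n (fun k => C k / 4^k) q = 0) : False := by
  set c : ℕ → ℝ := fun k => C k / 4^k with hc
  set S : ℝ := ∑ k ∈ range n,
      (c k * (2*(n:ℝ)-2*(k:ℝ)) - c (k+1) * (2*(k:ℝ)+2)) * q.1^(2*(n-1-k)) * q.2^(2*k) with hS
  have hS1 : q.2 * ∑ k ∈ range (n+1), c k * ((2*n-2*k : ℕ):ℝ) * q.1^(2*n-2*k-1) * q.2^(2*k)
      = q.1 * q.2 * ∑ k ∈ range n, (c k * (2*(n:ℝ)-2*(k:ℝ))) * q.1^(2*(n-1-k)) * q.2^(2*k) := by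
    rw [Finset.sum_range_succ, Nat.sub_self]
    simp only [Nat.cast_zero, mul_zero, zero_mul, add_zero]
    rw [Finset.mul_sum, Finset.mul_sum]
    refine Finset.sum_congr rfl fun k hk => ?_
    have hkn : k < n := Finset.mem_range.mp hk
    have ecast : ((2*n-2*k : ℕ):ℝ) = 2*(n:ℝ)-2*(k:ℝ) := by
      rw [Nat.cast_sub (by omega)]; push_cast; ring
    have epow : q.1^(2*n-2*k-1) = q.1^(2*(n-1-k)) * q.1 := by
      rw [← pow_succ]; congr 1; omega
    rw [ecast, epow]; ring
  have hS2 : q.1 * ∑ k ∈ range (n+1), c k * q.1^(2*n-2*k) * ((2*k : ℕ):ℝ) * q.2^(2*k-1)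
      = q.1 * q.2 * ∑ k ∈ range n, (c (k+1) * (2*(k:ℝ)+2)) * q.1^(2*(n-1-k)) * q.2^(2*k) := by
    rw [Finset.sum_range_succ']
    simp only [Nat.mul_zero, Nat.cast_zero, mul_zero, zero_mul, add_zero]
    rw [Finset.mul_sum, Finset.mul_sum]
    refine Finset.sum_congr rfl fun k hk => ?_
    have hkn : k < n := Finset.mem_range.mp hk
    have ecast : ((2*(k+1) : ℕ):ℝ) = 2*(k:ℝ)+2 := by push_cast; ring
    have epow1 : q.1^(2*n-2*(k+1)) = q.1^(2*(n-1-k)) := by congr 1; omega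
    have epow2 : q.2^(2*(k+1)-1) = q.2^(2*k) * q.2 := by
      have e : 2*(k+1)-1 = 2*k+1 := by omega
      rw [e, pow_succ]
    rw [ecast, epow1, epow2]
    try ring
  have h0 : q.2 * pd1 m g n c q - q.1 * pd2 m g n c q = 0 := by rw [hp1, hp2]; ring
  rw [pd1, pd2] at h0
  have h0' : -(g * (q.1 * q.2 * S)) = 0 := by
    rw [← h0, hS]
    have expand : ∑ k ∈ range n,
        (c k * (2*(n:ℝ)-2*(k:ℝ)) - c (k+1) * (2*(k:ℝ)+2)) * q.1^(2*(n-1-k)) * q.2^(2*k)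
        = ∑ k ∈ range n, (c k * (2*(n:ℝ)-2*(k:ℝ))) * q.1^(2*(n-1-k)) * q.2^(2*k)
          - ∑ k ∈ range n, (c (k+1) * (2*(k:ℝ)+2)) * q.1^(2*(n-1-k)) * q.2^(2*k) := by
      rw [← Finset.sum_sub_distrib]
      exact Finset.sum_congr rfl fun k _ => by ring
    rw [expand, mul_sub, mul_sub, ← hS1, ← hS2]
    ring
  have hSpos : 0 < S := by
    rw [hS]
    apply Finset.sum_pos
    · intro k hk
      have hkn : k < n := Finset.mem_range.mp hk
      have hDk := hD k (by omega)
      have hE : c k * (2*(n:ℝ)-2*(k:ℝ)) - c (k+1) * (2*(k:ℝ)+2)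
          = (4*C k*((n:ℝ)-(k:ℝ)) - C (k+1)*((k:ℝ)+1)) / (2*4^k) := by
        rw [hc]
        simp only []
        rw [pow_succ]
        field_simp
        ring
      have hpos1 : 0 < q.1^(2*(n-1-k)) := by
        rw [pow_mul]; exact pow_pos (by positivity) _
      have hpos2 : 0 < q.2^(2*k) := by
        rw [pow_mul]; exact pow_pos (by positivity) _
      have : 0 < c k * (2*(n:ℝ)-2*(k:ℝ)) - c (k+1) * (2*(k:ℝ)+2) := by
        rw [hE]; positivity
      positivity
    · exact ⟨0, Finset.mem_range.mpr (by omega)⟩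
  have : g * (q.1 * q.2 * S) ≠ 0 := by
    have hq12 : q.1 * q.2 ≠ 0 := mul_ne_zero h1 h2
    intro hcon
    rcases mul_eq_zero.mp hcon with h | h
    · exact hg.ne' h
    · rcases mul_eq_zero.mp h with h | h
      · exact hq12 h
      · exact hSpos.ne' h
  exact this (by linarith [h0'])

lemma crit_iff (m g : ℝ) (n : ℕ) (c : ℕ → ℝ) (V : ℝ × ℝ → ℝ)
    (hV : ∀ p : ℝ × ℝ, p ≠ 0 → V p = -m / Real.sqrt (p.1^2 + p.2^2) -
        g * ∑ k ∈ range (n+1), c k * p.1^(2*n-2*k) * p.2^(2*k))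
    (q : ℝ × ℝ) (hq : q ≠ 0) :
    (fderiv ℝ V q = 0) ↔ (pd1 m g n c q = 0 ∧ pd2 m g n c q = 0) := by
  have hmem : {p : ℝ × ℝ | p ≠ 0} ∈ nhds q := by
    have : IsOpen {p : ℝ × ℝ | p ≠ 0} := isOpen_ne
    exact this.mem_nhds hq
  have heq : V =ᶠ[nhds q] (fun p : ℝ × ℝ => -m / Real.sqrt (p.1^2 + p.2^2) -
      g * ∑ k ∈ range (n+1), c k * p.1^(2*n-2*k) * p.2^(2*k)) :=
    Filter.eventually_of_mem hmem (fun p hp => hV p hp)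
  have hF : HasFDerivAt V ((pd1 m g n c q) • ContinuousLinearMap.fst ℝ ℝ ℝ +
      (pd2 m g n c q) • ContinuousLinearMap.snd ℝ ℝ ℝ) q :=
    (hasfd m g n c q hq).congr_of_eventuallyEq heq
  rw [hF.fderiv]
  constructor
  · intro h
    constructor
    · have h1 := ContinuousLinearMap.ext_iff.mp h ((1:ℝ), (0:ℝ))
      simpa using h1
    · have h2 := ContinuousLinearMap.ext_iff.mp h ((0:ℝ), (1:ℝ))
      simpa using h2
  · rintro ⟨e1, e2⟩
    rw [e1, e2]
    simp

lemma axis1_crit (n : ℕ) (hn : 1 ≤ n) (m g : ℝ) (hm : 0 < m) (hg : 0 < g)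
    (C : ℕ → ℝ) (hC0 : C 0 = 1) (t : ℝ) (ht : t ≠ 0) :
    (pd1 m g n (fun k => C k / 4^k) (t, 0) = 0 ∧ pd2 m g n (fun k => C k / 4^k) (t, 0) = 0)
      ↔ |t| = (m/(2*(n:ℝ)*g)) ^ ((1:ℝ)/(2*(n:ℝ)+1)) := by
  have hn' : (1:ℝ) ≤ (n:ℝ) := by exact_mod_cast hn
  have hK : 0 < g * (2*(n:ℝ)) := by positivity
  constructor
  · rintro ⟨h1, _⟩
    rw [pd1_axis1] at h1
    have h1' : m * t / ((t^2) * Real.sqrt (t^2)) - (g * (2*(n:ℝ))) * t^(2*n-1) = 0 := by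
      rw [← h1]
      simp only [hC0, pow_zero]
      push_cast
      ring
    have := (solve_eq n hn m (g * (2*(n:ℝ))) t hm hK ht).mp h1'
    rw [this]
    congr 1
    ring
  · intro h
    constructor
    · rw [pd1_axis1]
      have h1' : m * t / ((t^2) * Real.sqrt (t^2)) - (g * (2*(n:ℝ))) * t^(2*n-1) = 0 := by
        apply (solve_eq n hn m (g * (2*(n:ℝ))) t hm hK ht).mpr
        rw [h]
        congr 1
        ring
      simp only [hC0, pow_zero]
      push_cast
      linear_combination h1'
    · exact pd2_axis1 m g n _ t

lemma axis2_crit (n : ℕ) (hn : 1 ≤ n) (m g : ℝ) (hm : 0 < m) (hg : 0 < g)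
    (C : ℕ → ℝ) (hCn : C n = 1) (t : ℝ) (ht : t ≠ 0) :
    (pd1 m g n (fun k => C k / 4^k) (0, t) = 0 ∧ pd2 m g n (fun k => C k / 4^k) (0, t) = 0)
      ↔ |t| = ((2:ℝ)^(2*n-1)*m/((n:ℝ)*g)) ^ ((1:ℝ)/(2*(n:ℝ)+1)) := by
  have hn' : (1:ℝ) ≤ (n:ℝ) := by exact_mod_cast hn
  have hK : 0 < g * (2*(n:ℝ)) / 4^n := by positivity
  have hbase : m / (g * (2*(n:ℝ)) / 4^n) = (2:ℝ)^(2*n-1)*m/((n:ℝ)*g) := by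
    have h1 : (4:ℝ)^n = 2^(2*n-1) * 2 := by
      rw [← pow_succ]
      have h2 : 2*n-1+1 = 2*n := by omega
      rw [h2, pow_mul]; norm_num
    rw [h1]
    have hn0 : (n:ℝ) ≠ 0 := by linarith
    field_simp
  constructor
  · rintro ⟨_, h2⟩
    rw [pd2_axis2] at h2
    have h2' : m * t / ((t^2) * Real.sqrt (t^2)) - (g * (2*(n:ℝ)) / 4^n) * t^(2*n-1) = 0 := by
      rw [← h2]
      simp only [hCn]
      push_cast
      ring
    have := (solve_eq n hn m (g * (2*(n:ℝ)) / 4^n) t hm hK ht).mp h2'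
    rw [this, hbase]
  · intro h
    constructor
    · exact pd1_axis2 m g n _ hn t
    · rw [pd2_axis2]
      have h2' : m * t / ((t^2) * Real.sqrt (t^2)) - (g * (2*(n:ℝ)) / 4^n) * t^(2*n-1) = 0 := by
        apply (solve_eq n hn m (g * (2*(n:ℝ)) / 4^n) t hm hK ht).mpr
        rw [h, hbase]
      simp only [hCn]
      push_cast
      linear_combination h2'

lemma sumV1 (n : ℕ) (c : ℕ → ℝ) (t : ℝ) :
    ∑ k ∈ range (n+1), c k * t^(2*n-2*k) * (0:ℝ)^(2*k) = c 0 * t^(2*n) := by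
  rw [Finset.sum_eq_single 0]
  · norm_num
  · intro k _ hk; rw [zero_pow (by omega)]; ring
  · intro h; exact absurd (Finset.mem_range.mpr (by omega)) h

lemma sumV2 (n : ℕ) (c : ℕ → ℝ) (t : ℝ) :
    ∑ k ∈ range (n+1), c k * (0:ℝ)^(2*n-2*k) * t^(2*k) = c n * t^(2*n) := by
  rw [Finset.sum_eq_single n]
  · rw [Nat.sub_self, pow_zero]; ring
  · intro k hk hkn
    have := Finset.mem_range.mp hk
    rw [zero_pow (by omega)]; ring
  · intro h; exact absurd (Finset.mem_range.mpr (by omega)) h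

lemma Vval1 (m g : ℝ) (n : ℕ) (C : ℕ → ℝ) (hC0 : C 0 = 1) (V : ℝ × ℝ → ℝ)
    (hV : ∀ p : ℝ × ℝ, p ≠ 0 → V p = -m / Real.sqrt (p.1^2 + p.2^2) -
        g * ∑ k ∈ range (n+1), (C k / 4^k) * p.1^(2*n-2*k) * p.2^(2*k))
    (t : ℝ) (ht : 0 < t) :
    V (t, 0) = -m / t - g * t^(2*n) ∧ V (-t, 0) = -m / t - g * t^(2*n) := by
  have hne : ((t,(0:ℝ)) : ℝ × ℝ) ≠ 0 := by
    simp [Prod.ext_iff, ht.ne']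
  have hne' : ((-t,(0:ℝ)) : ℝ × ℝ) ≠ 0 := by
    simp [Prod.ext_iff]
    exact ht.ne'
  constructor
  · rw [hV _ hne]
    show -m / Real.sqrt (t^2 + 0^2) - g * ∑ k ∈ range (n+1),
      (C k / 4^k) * t^(2*n-2*k) * (0:ℝ)^(2*k) = _
    rw [sumV1 n (fun k => C k / 4^k) t]
    rw [show t^2 + (0:ℝ)^2 = t^2 by ring, Real.sqrt_sq ht.le]
    simp [hC0]
  · rw [hV _ hne']
    show -m / Real.sqrt ((-t)^2 + 0^2) - g * ∑ k ∈ range (n+1),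
      (C k / 4^k) * (-t)^(2*n-2*k) * (0:ℝ)^(2*k) = _
    rw [sumV1 n (fun k => C k / 4^k) (-t)]
    rw [show (-t)^2 + (0:ℝ)^2 = t^2 by ring, Real.sqrt_sq ht.le]
    have : (-t)^(2*n) = t^(2*n) := by
      rw [pow_mul, pow_mul, neg_sq]
    rw [this]
    simp [hC0]

lemma Vval2 (m g : ℝ) (n : ℕ) (C : ℕ → ℝ) (hCn : C n = 1) (V : ℝ × ℝ → ℝ)
    (hV : ∀ p : ℝ × ℝ, p ≠ 0 → V p = -m / Real.sqrt (p.1^2 + p.2^2) -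
        g * ∑ k ∈ range (n+1), (C k / 4^k) * p.1^(2*n-2*k) * p.2^(2*k))
    (t : ℝ) (ht : 0 < t) :
    V (0, t) = -m / t - (g/4^n) * t^(2*n) ∧ V (0, -t) = -m / t - (g/4^n) * t^(2*n) := by
  have hne : (((0:ℝ),t) : ℝ × ℝ) ≠ 0 := by
    simp [Prod.ext_iff, ht.ne']
  have hne' : (((0:ℝ),-t) : ℝ × ℝ) ≠ 0 := by
    simp [Prod.ext_iff]
    exact ht.ne'
  constructor
  · rw [hV _ hne]
    show -m / Real.sqrt (0^2 + t^2) - g * ∑ k ∈ range (n+1),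
      (C k / 4^k) * (0:ℝ)^(2*n-2*k) * t^(2*k) = _
    rw [sumV2 n (fun k => C k / 4^k) t]
    rw [show (0:ℝ)^2 + t^2 = t^2 by ring, Real.sqrt_sq ht.le]
    simp only [hCn]
    ring
  · rw [hV _ hne']
    show -m / Real.sqrt (0^2 + (-t)^2) - g * ∑ k ∈ range (n+1),
      (C k / 4^k) * (0:ℝ)^(2*n-2*k) * (-t)^(2*k) = _
    rw [sumV2 n (fun k => C k / 4^k) (-t)]
    rw [show (0:ℝ)^2 + (-t)^2 = t^2 by ring, Real.sqrt_sq ht.le]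
    have : (-t)^(2*n) = t^(2*n) := by
      rw [pow_mul, pow_mul, neg_sq]
    rw [this]
    simp only [hCn]
    ring


/-- The generalized Stark-type potential
`V(q) = -m/|q| - g Σ_{k=0}^{n} (C_k/4^k) q₁^(2n-2k) q₂^(2k)` with `m, g > 0` and
positivity `D_k = 4 C_k (n-k) - C_{k+1}(k+1) > 0` has exactly the four critical points
`(±(m/(2ng))^(1/(2n+1)), 0)`, `(0, ±(2^(2n-1) m/(ng))^(1/(2n+1)))`, with critical values
`E₁ = -(2n+1)(m/(2n))^(2n/(2n+1)) g^(1/(2n+1))` on the `q₁`-axis and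
`E₂ = -(2n+1)(m/(4n))^(2n/(2n+1)) g^(1/(2n+1))` on the `q₂`-axis. -/
theorem stmt_13 (n : ℕ) (hn : 1 ≤ n) (m g : ℝ) (hm : 0 < m) (hg : 0 < g)
    (C : ℕ → ℝ) (hC0 : C 0 = 1)
    (hC : ∀ k : ℕ, 1 ≤ k → k ≤ n →
      C k = (-1 : ℝ) ^ k - ∑ ℓ ∈ Finset.range k,
        (-1 : ℝ) ^ (k - ℓ) * (Nat.choose (2 * n - 2 * ℓ) (k - ℓ) : ℝ) * C ℓ)
    (V : ℝ × ℝ → ℝ)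
    (hV : ∀ q : ℝ × ℝ, q ≠ 0 →
      V q = -m / Real.sqrt (q.1 ^ 2 + q.2 ^ 2) -
        g * ∑ k ∈ Finset.range (n + 1),
          (C k / 4 ^ k) * q.1 ^ (2 * n - 2 * k) * q.2 ^ (2 * k))
    (hD : ∀ k : ℕ, k ≤ n - 1 →
      0 < 4 * C k * ((n : ℝ) - (k : ℝ)) - C (k + 1) * ((k : ℝ) + 1)) :
    {q : ℝ × ℝ | q ≠ 0 ∧ fderiv ℝ V q = 0} =
      {((m / (2 * (n : ℝ) * g)) ^ (1 / (2 * (n : ℝ) + 1)), 0),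
       (-(m / (2 * (n : ℝ) * g)) ^ (1 / (2 * (n : ℝ) + 1)), 0),
       (0, (2 ^ (2 * n - 1) * m / ((n : ℝ) * g)) ^ (1 / (2 * (n : ℝ) + 1))),
       (0, -(2 ^ (2 * n - 1) * m / ((n : ℝ) * g)) ^ (1 / (2 * (n : ℝ) + 1)))} ∧
    V ((m / (2 * (n : ℝ) * g)) ^ (1 / (2 * (n : ℝ) + 1)), 0) =
      -(2 * (n : ℝ) + 1) * (m / (2 * (n : ℝ))) ^ ((2 * (n : ℝ)) / (2 * (n : ℝ) + 1)) *
        g ^ (1 / (2 * (n : ℝ) + 1)) ∧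
    V (-(m / (2 * (n : ℝ) * g)) ^ (1 / (2 * (n : ℝ) + 1)), 0) =
      -(2 * (n : ℝ) + 1) * (m / (2 * (n : ℝ))) ^ ((2 * (n : ℝ)) / (2 * (n : ℝ) + 1)) *
        g ^ (1 / (2 * (n : ℝ) + 1)) ∧
    V (0, (2 ^ (2 * n - 1) * m / ((n : ℝ) * g)) ^ (1 / (2 * (n : ℝ) + 1))) =
      -(2 * (n : ℝ) + 1) * (m / (4 * (n : ℝ))) ^ ((2 * (n : ℝ)) / (2 * (n : ℝ) + 1)) *
        g ^ (1 / (2 * (n : ℝ) + 1)) ∧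
    V (0, -(2 ^ (2 * n - 1) * m / ((n : ℝ) * g)) ^ (1 / (2 * (n : ℝ) + 1))) =
      -(2 * (n : ℝ) + 1) * (m / (4 * (n : ℝ))) ^ ((2 * (n : ℝ)) / (2 * (n : ℝ) + 1)) *
        g ^ (1 / (2 * (n : ℝ) + 1)) := by
  have hn' : (1:ℝ) ≤ (n:ℝ) := by exact_mod_cast hn
  have hn0 : (0:ℝ) < (n:ℝ) := by linarith
  have hCn : C n = 1 := by
    rw [C_closed n C hC0 hC n le_rfl, show 2*n - n = n by omega, Nat.choose_self, Nat.cast_one]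
  have hA : 0 < m / (2 * (n:ℝ) * g) := by positivity
  have ha : 0 < (m / (2 * (n : ℝ) * g)) ^ (1 / (2 * (n : ℝ) + 1)) :=
    Real.rpow_pos_of_pos hA _
  set a : ℝ := (m / (2 * (n : ℝ) * g)) ^ (1 / (2 * (n : ℝ) + 1)) with hadef
  have hB : 0 < (2:ℝ) ^ (2*n-1) * m / ((n:ℝ) * g) := by positivity
  have hb : 0 < ((2:ℝ) ^ (2*n-1) * m / ((n:ℝ) * g)) ^ (1 / (2 * (n : ℝ) + 1)) :=
    Real.rpow_pos_of_pos hB _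
  set b : ℝ := ((2:ℝ) ^ (2*n-1) * m / ((n:ℝ) * g)) ^ (1 / (2 * (n : ℝ) + 1)) with hbdef
  have hVa := Vval1 m g n C hC0 V hV a ha
  have hVb := Vval2 m g n C hCn V hV b hb
  refine ⟨?_, ?_, ?_, ?_, ?_⟩
  · ext q
    simp only [Set.mem_setOf_eq, Set.mem_insert_iff, Set.mem_singleton_iff]
    constructor
    · rintro ⟨hq, hfd⟩
      have hcrit := (crit_iff m g n (fun k => C k / 4^k) V hV q hq).mp hfd
      by_cases h2 : q.2 = 0
      · have h1 : q.1 ≠ 0 := by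
          intro h1
          exact hq (Prod.ext_iff.mpr ⟨h1, h2⟩)
        have hq' : q = (q.1, 0) := by
          rw [Prod.ext_iff]; exact ⟨rfl, h2⟩
        rw [hq'] at hcrit
        have habs := (axis1_crit n hn m g hm hg C hC0 q.1 h1).mp hcrit
        rcases (abs_eq ha.le).mp habs with he | he
        · left; rw [hq', he]
        · right; left; rw [hq', he]
      · by_cases h1 : q.1 = 0
        · have hq' : q = (0, q.2) := by
            rw [Prod.ext_iff]; exact ⟨h1, rfl⟩
          rw [hq'] at hcrit
          have habs := (axis2_crit n hn m g hm hg C hCn q.2 h2).mp hcrit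
          rcases (abs_eq hb.le).mp habs with he | he
          · right; right; left; rw [hq', he]
          · right; right; right; rw [hq', he]
        · exact absurd hcrit.1 (fun hp1 =>
            offaxis n hn m g hg C hD q h1 h2 hp1 hcrit.2)
    · intro hmem
      have hea : ∀ t : ℝ, t ≠ 0 → |t| = a →
          ((t, (0:ℝ)) ≠ (0 : ℝ × ℝ) ∧ fderiv ℝ V (t, 0) = 0) := by
        intro t ht habs
        refine ⟨by simp [Prod.ext_iff, ht], ?_⟩
        refine (crit_iff m g n (fun k => C k / 4^k) V hV (t,0)
          (by simp [Prod.ext_iff, ht])).mpr ?_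
        exact (axis1_crit n hn m g hm hg C hC0 t ht).mpr habs
      have heb : ∀ t : ℝ, t ≠ 0 → |t| = b →
          (((0:ℝ), t) ≠ (0 : ℝ × ℝ) ∧ fderiv ℝ V (0, t) = 0) := by
        intro t ht habs
        refine ⟨by simp [Prod.ext_iff, ht], ?_⟩
        refine (crit_iff m g n (fun k => C k / 4^k) V hV (0,t)
          (by simp [Prod.ext_iff, ht])).mpr ?_
        exact (axis2_crit n hn m g hm hg C hCn t ht).mpr habs
      rcases hmem with rfl | rfl | rfl | rfl
      · exact hea a ha.ne' (abs_of_pos ha)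
      · exact hea (-a) (neg_ne_zero.mpr ha.ne') (by rw [abs_neg, abs_of_pos ha])
      · exact heb b hb.ne' (abs_of_pos hb)
      · exact heb (-b) (neg_ne_zero.mpr hb.ne') (by rw [abs_neg, abs_of_pos hb])
  · rw [hVa.1, hadef]
    exact val1 n hn m g hm hg
  · rw [hVa.2, hadef]
    exact val1 n hn m g hm hg
  · rw [hVb.1, hbdef]
    exact val2 n hn m g hm hg
  · rw [hVb.2, hbdef]
    exact val2 n hn m g hm hg
end

section
/- Let n ≥ 1 be an integer and m > 0, g > 0. Define C₀ = 1 and, for 1 ≤ k ≤ n, C_k = (−1)^k − Σ_{ℓ=0}^{k−1} (−1)^{k−ℓ} · binom(2n−2ℓ, k−ℓ) · C_ℓ. Let V : ℝ² \ {(0,0)} → ℝ be V(q₁,q₂) = −m/√(q₁²+q₂²) − g · Σ_{k=0}^{n} (C_k/4^k) · q₁^(2n−2k) q₂^(2k). Assume that 4·C_k·(n−k) − C_{k+1}·(k+1) > 0 for every k with 0 ≤ k ≤ n−1. Then every critical point (q₁, q₂) of V satisfies q₁ = 0 or q₂ = 0. -/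
open Set Finset

/-- For the generalized Stark-type potential
`V(q) = -m/|q| - g Σ_{k=0}^{n} (C_k/4^k) q₁^(2n-2k) q₂^(2k)` with `m, g > 0`, if
`4 C_k (n-k) - C_{k+1}(k+1) > 0` for all `0 ≤ k ≤ n-1`, then every critical point of `V`
lies on one of the coordinate axes. -/
theorem stmt_14 (n : ℕ) (hn : 1 ≤ n) (m g : ℝ) (hm : 0 < m) (hg : 0 < g)
    (C : ℕ → ℝ) (hC0 : C 0 = 1)
    (hC : ∀ k : ℕ, 1 ≤ k → k ≤ n →
      C k = (-1 : ℝ) ^ k - ∑ ℓ ∈ Finset.range k,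
        (-1 : ℝ) ^ (k - ℓ) * (Nat.choose (2 * n - 2 * ℓ) (k - ℓ) : ℝ) * C ℓ)
    (V : ℝ × ℝ → ℝ)
    (hV : ∀ q : ℝ × ℝ, q ≠ 0 →
      V q = -m / Real.sqrt (q.1 ^ 2 + q.2 ^ 2) -
        g * ∑ k ∈ Finset.range (n + 1),
          (C k / 4 ^ k) * q.1 ^ (2 * n - 2 * k) * q.2 ^ (2 * k))
    (hD : ∀ k : ℕ, k ≤ n - 1 →
      0 < 4 * C k * ((n : ℝ) - (k : ℝ)) - C (k + 1) * ((k : ℝ) + 1)) :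
    ∀ q : ℝ × ℝ, q ≠ 0 → fderiv ℝ V q = 0 → q.1 = 0 ∨ q.2 = 0 := by
  rintro ⟨a, b⟩ hq hfd
  by_contra hcon
  push_neg at hcon
  obtain ⟨ha, hb⟩ := hcon
  simp only at ha hb hfd
  -- basic positivity facts
  have ha2 : 0 < a ^ 2 := lt_of_le_of_ne (sq_nonneg a) (Ne.symm (pow_ne_zero 2 ha))
  have hb2 : 0 < b ^ 2 := lt_of_le_of_ne (sq_nonneg b) (Ne.symm (pow_ne_zero 2 hb))
  have hr2 : 0 < a ^ 2 + b ^ 2 := by linarith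
  set r := Real.sqrt (a ^ 2 + b ^ 2) with hrdef
  have hrpos : 0 < r := Real.sqrt_pos.mpr hr2
  have hrne : r ≠ 0 := ne_of_gt hrpos
  have hrsq : r ^ 2 = a ^ 2 + b ^ 2 := Real.sq_sqrt hr2.le
  -- the explicit formula
  set W : ℝ × ℝ → ℝ := fun p => -m / Real.sqrt (p.1 ^ 2 + p.2 ^ 2) -
      g * ∑ k ∈ Finset.range (n + 1),
        (C k / 4 ^ k) * p.1 ^ (2 * n - 2 * k) * p.2 ^ (2 * k) with hWdef
  have hmem : ({(0 : ℝ × ℝ)}ᶜ : Set (ℝ × ℝ)) ∈ nhds ((a, b) : ℝ × ℝ) :=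
    isOpen_compl_singleton.mem_nhds hq
  have heq : V =ᶠ[nhds ((a, b) : ℝ × ℝ)] W :=
    Filter.eventuallyEq_of_mem hmem fun p hp => hV p hp
  -- differentiability of W at (a,b)
  have hsqne : (a ^ 2 + b ^ 2 : ℝ) ≠ 0 := ne_of_gt hr2
  have hinner : DifferentiableAt ℝ (fun p : ℝ × ℝ => p.1 ^ 2 + p.2 ^ 2) (a, b) := by
    fun_prop
  have hsqrtd : DifferentiableAt ℝ (fun p : ℝ × ℝ => Real.sqrt (p.1 ^ 2 + p.2 ^ 2)) (a, b) :=
    ((Real.hasDerivAt_sqrt hsqne).differentiableAt).comp (a, b) hinner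
  have hdW : DifferentiableAt ℝ W (a, b) := by
    rw [hWdef]
    fun_prop (disch := simp_all)
  have hdV : DifferentiableAt ℝ V (a, b) := hdW.congr_of_eventuallyEq heq
  have hF : HasFDerivAt V 0 ((a, b) : ℝ × ℝ) := hfd ▸ hdV.hasFDerivAt
  -- partial derivative in the first variable
  set g1 : ℝ → ℝ := fun t => -m / Real.sqrt (t ^ 2 + b ^ 2) -
      g * ∑ k ∈ Finset.range (n + 1),
        (C k / 4 ^ k) * t ^ (2 * n - 2 * k) * b ^ (2 * k) with hg1def
  have hP1 : HasDerivAt g1 0 a := by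
    have hline : HasDerivAt (fun t : ℝ => ((t, b) : ℝ × ℝ)) ((1 : ℝ), (0 : ℝ)) a :=
      (hasDerivAt_id a).prodMk (hasDerivAt_const a b)
    have h := hF.comp_hasDerivAt a hline
    have hfun : (V ∘ fun t : ℝ => ((t, b) : ℝ × ℝ)) = g1 := by
      funext t
      exact hV (t, b) fun h0 => hb (Prod.mk_eq_zero.mp h0).2
    rw [hfun] at h
    simpa using h
  set S1 : ℝ := ∑ k ∈ Finset.range (n + 1),
      (C k / 4 ^ k) * ((2 * n - 2 * k : ℕ) * a ^ (2 * n - 2 * k - 1)) * b ^ (2 * k) with hS1def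
  have hu1 : HasDerivAt (fun t : ℝ => t ^ 2 + b ^ 2) (2 * a) a := by
    simpa using (hasDerivAt_pow 2 a).add_const (b ^ 2)
  have hs1 : HasDerivAt (fun t : ℝ => Real.sqrt (t ^ 2 + b ^ 2)) (1 / (2 * r) * (2 * a)) a :=
    (Real.hasDerivAt_sqrt hsqne).comp a hu1
  have hq1 : HasDerivAt (fun t : ℝ => -m / Real.sqrt (t ^ 2 + b ^ 2)) (m * a / r ^ 3) a := by
    have h := (hasDerivAt_const a (-m)).fun_div hs1 hrne
    refine h.congr_deriv (Eq.symm ?_)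
    field_simp
    linear_combination (m * a) * Real.sq_sqrt hr2.le - (m * a) * hrsq
  have hsum1 : HasDerivAt
      (fun t : ℝ => ∑ k ∈ Finset.range (n + 1),
        (C k / 4 ^ k) * t ^ (2 * n - 2 * k) * b ^ (2 * k)) S1 a := by
    refine HasDerivAt.fun_sum fun k _ => ?_
    exact ((hasDerivAt_pow (2 * n - 2 * k) a).const_mul (C k / 4 ^ k)).mul_const (b ^ (2 * k))
  have hg1' : HasDerivAt g1 (m * a / r ^ 3 - g * S1) a := hq1.sub (hsum1.const_mul g)
  have hE1 : m * a / r ^ 3 - g * S1 = 0 := hg1'.unique hP1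
  -- partial derivative in the second variable
  set g2 : ℝ → ℝ := fun t => -m / Real.sqrt (a ^ 2 + t ^ 2) -
      g * ∑ k ∈ Finset.range (n + 1),
        (C k / 4 ^ k) * a ^ (2 * n - 2 * k) * t ^ (2 * k) with hg2def
  have hP2 : HasDerivAt g2 0 b := by
    have hline : HasDerivAt (fun t : ℝ => ((a, t) : ℝ × ℝ)) ((0 : ℝ), (1 : ℝ)) b :=
      (hasDerivAt_const b a).prodMk (hasDerivAt_id b)
    have h := hF.comp_hasDerivAt b hline
    have hfun : (V ∘ fun t : ℝ => ((a, t) : ℝ × ℝ)) = g2 := by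
      funext t
      exact hV (a, t) fun h0 => ha (Prod.mk_eq_zero.mp h0).1
    rw [hfun] at h
    simpa using h
  set S2 : ℝ := ∑ k ∈ Finset.range (n + 1),
      (C k / 4 ^ k) * a ^ (2 * n - 2 * k) * ((2 * k : ℕ) * b ^ (2 * k - 1)) with hS2def
  have hu2 : HasDerivAt (fun t : ℝ => a ^ 2 + t ^ 2) (2 * b) b := by
    simpa using (hasDerivAt_pow 2 b).const_add (a ^ 2)
  have hsqne2 : (a ^ 2 + b ^ 2 : ℝ) ≠ 0 := hsqne
  have hs2 : HasDerivAt (fun t : ℝ => Real.sqrt (a ^ 2 + t ^ 2)) (1 / (2 * r) * (2 * b)) b :=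
    (Real.hasDerivAt_sqrt hsqne2).comp b hu2
  have hq2 : HasDerivAt (fun t : ℝ => -m / Real.sqrt (a ^ 2 + t ^ 2)) (m * b / r ^ 3) b := by
    have h := (hasDerivAt_const b (-m)).fun_div hs2 hrne
    refine h.congr_deriv (Eq.symm ?_)
    field_simp
    linear_combination (m * b) * Real.sq_sqrt hr2.le - (m * b) * hrsq
  have hsum2 : HasDerivAt
      (fun t : ℝ => ∑ k ∈ Finset.range (n + 1),
        (C k / 4 ^ k) * a ^ (2 * n - 2 * k) * t ^ (2 * k)) S2 b := by
    refine HasDerivAt.fun_sum fun k _ => ?_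
    exact (hasDerivAt_pow (2 * k) b).const_mul ((C k / 4 ^ k) * a ^ (2 * n - 2 * k))
  have hg2' : HasDerivAt g2 (m * b / r ^ 3 - g * S2) b := hq2.sub (hsum2.const_mul g)
  have hE2 : m * b / r ^ 3 - g * S2 = 0 := hg2'.unique hP2
  -- combine: b * ∂₁ - a * ∂₂ = 0 forces b*S1 = a*S2
  have h3 : b * S1 - a * S2 = 0 := by
    have hzero : g * (b * S1 - a * S2) = 0 := by
      linear_combination (-b) * hE1 + a * hE2
    rcases mul_eq_zero.mp hzero with h | h
    · exact absurd h (ne_of_gt hg)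
    · exact h
  -- the key algebraic identity
  set T : ℝ := ∑ k ∈ Finset.range n,
      (2 / 4 ^ (k + 1) * (4 * C k * ((n : ℝ) - (k : ℝ)) - C (k + 1) * ((k : ℝ) + 1))) *
        (a ^ 2) ^ (n - 1 - k) * (b ^ 2) ^ k with hTdef
  have hid : b * S1 - a * S2 = a * b * T := by
    rw [hS1def, hS2def, hTdef, Finset.mul_sum, Finset.mul_sum, Finset.mul_sum,
      Finset.sum_range_succ, Finset.sum_range_succ']
    have hlast : b * ((C n / 4 ^ n) * ((2 * n - 2 * n : ℕ) * a ^ (2 * n - 2 * n - 1)) *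
        b ^ (2 * n)) = 0 := by
      simp
    have hfirst : a * ((C 0 / 4 ^ 0) * a ^ (2 * n - 2 * 0) * ((2 * 0 : ℕ) * b ^ (2 * 0 - 1)))
        = 0 := by simp
    rw [hlast, hfirst, add_zero, add_zero, ← Finset.sum_sub_distrib]
    refine Finset.sum_congr rfl fun k hk => ?_
    have hkn : k < n := Finset.mem_range.mp hk
    have e1 : 2 * n - 2 * k - 1 = 2 * (n - 1 - k) + 1 := by omega
    have e2 : 2 * n - 2 * (k + 1) = 2 * (n - 1 - k) := by omega
    have e3 : 2 * (k + 1) - 1 = 2 * k + 1 := by omega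
    have h2k : 2 * k ≤ 2 * n := by omega
    have c1 : ((2 * n - 2 * k : ℕ) : ℝ) = 2 * (n : ℝ) - 2 * (k : ℝ) := by
      push_cast [Nat.cast_sub h2k]
      ring
    rw [e1, e2, e3, c1]
    push_cast
    rw [pow_succ a (2 * (n - 1 - k)), pow_mul a 2 (n - 1 - k),
      pow_succ b (2 * k), pow_mul b 2 k]
    ring
  have hT : 0 < T := by
    rw [hTdef]
    refine Finset.sum_pos (fun k hk => ?_) ⟨0, Finset.mem_range.mpr (by omega)⟩
    have hkn : k < n := Finset.mem_range.mp hk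
    have hdk := hD k (by omega)
    have h1 : (0 : ℝ) < 2 / 4 ^ (k + 1) := by positivity
    exact mul_pos (mul_pos (mul_pos h1 hdk) (pow_pos ha2 _)) (pow_pos hb2 _)
  have : a * b * T = 0 := by rw [← hid]; exact h3
  exact (mul_ne_zero (mul_ne_zero ha hb) (ne_of_gt hT)) this
end

section
/- Let n ≥ 1 be an integer. Define C₀ = 1 and, for 1 ≤ k ≤ n, C_k = (−1)^k − Σ_{ℓ=0}^{k−1} (−1)^{k−ℓ} · binom(2n−2ℓ, k−ℓ) · C_ℓ. Then C_n = 1. -/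
open Finset

lemma diff_step (k : ℕ) (g : ℕ → ℝ) :
    ∑ j ∈ range (k+2), (-1:ℝ)^j * ((k+1).choose j) * g j
      = ∑ j ∈ range (k+1), (-1:ℝ)^j * (k.choose j) * (g j - g (j+1)) := by
  rw [Finset.sum_range_succ' (fun j => (-1:ℝ)^j * ((k+1).choose j) * g j) (k+1)]
  have h1 : ∑ j ∈ range (k+1), (-1:ℝ)^(j+1) * (((k+1).choose (j+1)) : ℝ) * g (j+1)
      = ∑ j ∈ range (k+1), ((-1:ℝ)^(j+1) * (k.choose j) * g (j+1)
          + (-1:ℝ)^(j+1) * (k.choose (j+1)) * g (j+1)) := by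
    refine Finset.sum_congr rfl fun j _ => ?_
    rw [Nat.choose_succ_succ]
    push_cast
    ring
  have h2 : ∑ j ∈ range (k+1), (-1:ℝ)^(j+1) * ((k.choose (j+1)) : ℝ) * g (j+1)
      = ∑ j ∈ range (k+1), (-1:ℝ)^j * (k.choose j) * g j - g 0 := by
    rw [Finset.sum_range_succ' (fun j => (-1:ℝ)^j * (k.choose j) * g j) k,
      Finset.sum_range_succ (fun j => (-1:ℝ)^(j+1) * ((k.choose (j+1)) : ℝ) * g (j+1)) k]
    simp [Nat.choose_succ_self]
  have h3 : ∑ j ∈ range (k+1), (-1:ℝ)^(j+1) * ((k.choose j) : ℝ) * g (j+1)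
      = -∑ j ∈ range (k+1), (-1:ℝ)^j * (k.choose j) * g (j+1) := by
    rw [← Finset.sum_neg_distrib]
    exact Finset.sum_congr rfl fun j _ => by ring
  have h4 : ∑ j ∈ range (k+1), (-1:ℝ)^j * ((k.choose j) : ℝ) * (g j - g (j+1))
      = ∑ j ∈ range (k+1), (-1:ℝ)^j * (k.choose j) * g j
        - ∑ j ∈ range (k+1), (-1:ℝ)^j * (k.choose j) * g (j+1) := by
    rw [← Finset.sum_sub_distrib]
    exact Finset.sum_congr rfl fun j _ => by ring
  rw [h1, Finset.sum_add_distrib, h2, h3, h4]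
  simp
  ring

lemma key (k : ℕ) : ∀ r : ℕ, ∑ j ∈ range (k+1),
    (-1:ℝ)^j * (k.choose j) * (((r+j).choose k : ℕ) : ℝ) = (-1:ℝ)^k := by
  induction k with
  | zero => intro r; simp
  | succ k ih =>
    intro r
    rw [show k+1+1 = k+2 from rfl, diff_step k (fun j => (((r+j).choose (k+1) : ℕ) : ℝ))]
    have h : ∀ j ∈ range (k+1),
        (-1:ℝ)^j * (k.choose j) * ((((r+j).choose (k+1) : ℕ) : ℝ) - (((r+(j+1)).choose (k+1) : ℕ) : ℝ))
        = -((-1:ℝ)^j * (k.choose j) * (((r+j).choose k : ℕ) : ℝ)) := by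
      intro j _
      have : (r+(j+1)).choose (k+1) = (r+j).choose k + (r+j).choose (k+1) := by
        rw [show r+(j+1) = (r+j)+1 from rfl, Nat.choose_succ_succ]
      rw [this]
      push_cast
      ring
    rw [Finset.sum_congr rfl h, Finset.sum_neg_distrib, ih r]
    ring


/-- The top coefficient of the generalized Stark-type potential equals one: with `C₀ = 1`
and `C_k = (-1)^k - Σ_{ℓ=0}^{k-1} (-1)^(k-ℓ) binom(2n-2ℓ, k-ℓ) C_ℓ` for `1 ≤ k ≤ n`, one
has `C_n = 1`. -/
theorem stmt_15 (n : ℕ) (hn : 1 ≤ n)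
    (C : ℕ → ℝ) (hC0 : C 0 = 1)
    (hC : ∀ k : ℕ, 1 ≤ k → k ≤ n →
      C k = (-1 : ℝ) ^ k - ∑ ℓ ∈ Finset.range k,
        (-1 : ℝ) ^ (k - ℓ) * (Nat.choose (2 * n - 2 * ℓ) (k - ℓ) : ℝ) * C ℓ) :
    C n = 1 := by
  have main : ∀ k, k ≤ n → C k = (((2*n - k).choose k : ℕ) : ℝ) := by
    intro k
    induction k using Nat.strong_induction_on with
    | _ k ih =>
      intro hk
      rcases Nat.eq_zero_or_pos k with h0 | h1
      · subst h0; simpa using hC0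
      · rw [hC k h1 hk]
        have hsum : ∀ ℓ ∈ range k, (-1:ℝ)^(k-ℓ) * (Nat.choose (2*n-2*ℓ) (k-ℓ) : ℝ) * C ℓ
            = (-1:ℝ)^(k-ℓ) * (Nat.choose (2*n-2*ℓ) (k-ℓ) : ℝ) * (((2*n-ℓ).choose ℓ : ℕ) : ℝ) := by
          intro ℓ hl
          rw [ih ℓ (Finset.mem_range.mp hl) (le_of_lt (lt_of_lt_of_le (Finset.mem_range.mp hl) hk))]
        rw [Finset.sum_congr rfl hsum]
        have big : ∑ j ∈ range (k+1),
            (-1:ℝ)^(k-j) * (Nat.choose (2*n-2*j) (k-j) : ℝ) * (((2*n-j).choose j : ℕ) : ℝ)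
            = (-1:ℝ)^k := by
          have term : ∀ j ∈ range (k+1),
              (-1:ℝ)^(k-j) * (Nat.choose (2*n-2*j) (k-j) : ℝ) * (((2*n-j).choose j : ℕ) : ℝ)
              = (fun j => (-1:ℝ)^j * (k.choose j) * (((2*n-k+j).choose k : ℕ) : ℝ)) (k+1-1-j) := by
            intro j hj
            have hjk : j ≤ k := by have := Finset.mem_range.mp hj; omega
            have hnat : (2*n-j).choose k * k.choose j
                = (2*n-j).choose j * (2*n-2*j).choose (k-j) := by
              have h := Nat.choose_mul (n := 2*n-j) (k := k) (s := j) hjk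
              rwa [show 2*n-j-j = 2*n-2*j by omega] at h
            have hr : ((2*n-j).choose k : ℝ) * (k.choose j : ℝ)
                = ((2*n-j).choose j : ℝ) * ((2*n-2*j).choose (k-j) : ℝ) := by
              exact_mod_cast congrArg (Nat.cast (R := ℝ)) hnat
            simp only []
            rw [show k+1-1-j = k-j by omega,
              show 2*n-k+(k-j) = 2*n-j by omega,
              Nat.choose_symm hjk]
            linear_combination (-(-1:ℝ)^(k-j)) * hr
          rw [Finset.sum_congr rfl term,
            Finset.sum_range_reflect (fun j => (-1:ℝ)^j * (k.choose j) * (((2*n-k+j).choose k : ℕ) : ℝ)) (k+1),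
            key k (2*n-k)]
        rw [Finset.sum_range_succ] at big
        have : (-1:ℝ)^(k-k) * (Nat.choose (2*n-2*k) (k-k) : ℝ) * (((2*n-k).choose k : ℕ) : ℝ)
            = (((2*n-k).choose k : ℕ) : ℝ) := by simp
        rw [this] at big
        linarith [big]
  rw [main n le_rfl, show 2*n-n = n by omega, Nat.choose_self]
  norm_num
end

section
/- Let n ≥ 1 be an integer and define C₀ = 1 and, for 1 ≤ k ≤ n, C_k = (−1)^k − Σ_{ℓ=0}^{k−1} (−1)^{k−ℓ} · binom(2n−2ℓ, k−ℓ) · C_ℓ. Then for all real numbers z₁, z₂: (z₁² + z₂²) · Σ_{k=0}^{n} (C_k/4^k) · (z₁² − z₂²)^(2(n−k)) · (2 z₁ z₂)^(2k) = z₁^(4n+2) + z₂^(4n+2). -/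
open Finset

private lemma stark_step1 (n : ℕ) (C : ℕ → ℝ) (hC0 : C 0 = 1)
    (hC : ∀ k : ℕ, 1 ≤ k → k ≤ n →
      C k = (-1 : ℝ) ^ k - ∑ ℓ ∈ Finset.range k,
        (-1 : ℝ) ^ (k - ℓ) * (Nat.choose (2 * n - 2 * ℓ) (k - ℓ) : ℝ) * C ℓ) :
    ∀ k ≤ n, ∑ ℓ ∈ Finset.range (k+1),
      (-1 : ℝ)^ℓ * (Nat.choose (2*n - 2*ℓ) (k-ℓ) : ℝ) * C ℓ = 1 := by
  intro k hk
  rcases Nat.eq_zero_or_pos k with h0 | h1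
  · subst h0; simp [hC0]
  · rw [Finset.sum_range_succ]
    have hsign : ∀ ℓ ∈ Finset.range k, (-1:ℝ)^k * ((-1:ℝ)^(k-ℓ) * (Nat.choose (2*n-2*ℓ) (k-ℓ) : ℝ) * C ℓ)
        = (-1:ℝ)^ℓ * (Nat.choose (2*n-2*ℓ) (k-ℓ) : ℝ) * C ℓ := by
      intro ℓ hℓ
      simp only [Finset.mem_range] at hℓ
      have h : (-1:ℝ)^k * (-1:ℝ)^(k-ℓ) = (-1:ℝ)^ℓ := by
        rw [← pow_add, show k + (k-ℓ) = 2*(k-ℓ)+ℓ from by omega, pow_add, pow_mul]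
        norm_num
      rw [← mul_assoc, ← mul_assoc, h]
    have hterm : (-1:ℝ)^k * (Nat.choose (2*n-2*k) (k-k) : ℝ) * C k
        = 1 - ∑ ℓ ∈ Finset.range k, (-1:ℝ)^ℓ * (Nat.choose (2*n-2*ℓ) (k-ℓ) : ℝ) * C ℓ := by
      simp only [Nat.sub_self, Nat.choose_zero_right, Nat.cast_one, mul_one]
      rw [hC k h1 hk, mul_sub, ← pow_add, ← two_mul, pow_mul]
      norm_num
      rw [Finset.mul_sum, Finset.sum_congr rfl hsign]
    rw [hterm]; ring

private lemma stark_coeff (n : ℕ) (C : ℕ → ℝ)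
    (h1 : ∀ k ≤ n, ∑ ℓ ∈ Finset.range (k+1),
      (-1 : ℝ)^ℓ * (Nat.choose (2*n - 2*ℓ) (k-ℓ) : ℝ) * C ℓ = 1) :
    ∀ m ≤ 2*n, ∑ ℓ ∈ Finset.range (n+1),
      (if ℓ ≤ m then (-1 : ℝ)^ℓ * C ℓ * (Nat.choose (2*(n-ℓ)) (m-ℓ) : ℝ) else 0) = 1 := by
  intro m hm
  rcases le_or_gt m n with hmn | hmn
  · rw [← Finset.sum_subset (Finset.range_subset_range.2 (by omega : m+1 ≤ n+1))
      (by intro x hx hnx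
          simp only [Finset.mem_range] at hx hnx
          rw [if_neg (by omega)])]
    refine (Finset.sum_congr rfl ?_).trans (h1 m hmn)
    intro ℓ hℓ
    simp only [Finset.mem_range] at hℓ
    rw [if_pos (by omega), show 2*(n-ℓ) = 2*n - 2*ℓ from by omega]
    ring
  · set k := 2*n - m with hk
    have hkn : k ≤ n := by omega
    rw [← Finset.sum_subset (Finset.range_subset_range.2 (by omega : k+1 ≤ n+1))
      (by intro x hx hnx
          simp only [Finset.mem_range] at hx hnx
          rw [if_pos (by omega),
            Nat.choose_eq_zero_of_lt (by omega : 2*(n-x) < m - x)]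
          simp)]
    refine (Finset.sum_congr rfl ?_).trans (h1 k hkn)
    intro ℓ hℓ
    simp only [Finset.mem_range] at hℓ
    rw [if_pos (by omega), show m - ℓ = 2*(n-ℓ) - (k-ℓ) from by omega,
      Nat.choose_symm (by omega : k - ℓ ≤ 2*(n-ℓ)),
      show 2*(n-ℓ) = 2*n - 2*ℓ from by omega]
    ring

private lemma stark_key (n : ℕ) (C : ℕ → ℝ)
    (hcoeff : ∀ m ≤ 2*n, ∑ ℓ ∈ Finset.range (n+1),
      (if ℓ ≤ m then (-1 : ℝ)^ℓ * C ℓ * (Nat.choose (2*(n-ℓ)) (m-ℓ) : ℝ) else 0) = 1) :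
    ∀ u : ℝ, ∑ ℓ ∈ Finset.range (n+1), (-1 : ℝ)^ℓ * C ℓ * u^ℓ * (u+1)^(2*(n-ℓ))
      = ∑ m ∈ Finset.range (2*n+1), u^m := by
  intro u
  have hterm : ∀ ℓ ∈ Finset.range (n+1),
      (-1 : ℝ)^ℓ * C ℓ * u^ℓ * (u+1)^(2*(n-ℓ))
      = ∑ m ∈ Finset.range (2*n+1),
          (if ℓ ≤ m then (-1 : ℝ)^ℓ * C ℓ * (Nat.choose (2*(n-ℓ)) (m-ℓ) : ℝ) else 0) * u^m := by
    intro ℓ hℓ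
    simp only [Finset.mem_range] at hℓ
    set c : ℝ := (-1 : ℝ)^ℓ * C ℓ with hc
    set N := 2*(n-ℓ) with hN
    have e1 : c * u^ℓ * (u+1)^N = ∑ j ∈ Finset.range (N+1),
        c * (Nat.choose N j : ℝ) * u^(ℓ+j) := by
      rw [add_pow, Finset.mul_sum]
      refine Finset.sum_congr rfl fun j hj => ?_
      rw [pow_add]
      simp
      ring
    rw [e1]
    rw [Finset.sum_subset (Finset.range_subset_range.2 (by omega : N+1 ≤ 2*n+1-ℓ))
      (by intro x hx hnx
          simp only [Finset.mem_range] at hx hnx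
          rw [Nat.choose_eq_zero_of_lt (by omega : N < x)]
          simp)]
    have e2 : ∑ m ∈ Finset.Ico ℓ (2*n+1),
        (if ℓ ≤ m then c * (Nat.choose N (m-ℓ) : ℝ) else 0) * u^m
        = ∑ j ∈ Finset.range (2*n+1-ℓ), c * (Nat.choose N j : ℝ) * u^(ℓ+j) := by
      rw [Finset.sum_Ico_eq_sum_range]
      refine Finset.sum_congr rfl fun j hj => ?_
      rw [if_pos (by omega)]
      simp
    rw [← e2]
    refine Finset.sum_subset (by
        intro x hx
        simp only [Finset.mem_Ico] at hx
        simp only [Finset.mem_range]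
        omega) ?_
    intro x hx hnx
    simp only [Finset.mem_range] at hx
    simp only [Finset.mem_Ico] at hnx
    rw [if_neg (by omega)]
    ring
  rw [Finset.sum_congr rfl hterm, Finset.sum_comm]
  refine Finset.sum_congr rfl fun m hm => ?_
  simp only [Finset.mem_range] at hm
  rw [← Finset.sum_mul, hcoeff m (by omega), one_mul]

private lemma stark_hf (n : ℕ) (C : ℕ → ℝ)
    (key : ∀ u : ℝ, ∑ ℓ ∈ Finset.range (n+1), (-1 : ℝ)^ℓ * C ℓ * u^ℓ * (u+1)^(2*(n-ℓ))
      = ∑ m ∈ Finset.range (2*n+1), u^m) :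
    ∀ t : ℝ, (t+1) * ∑ k ∈ Finset.range (n+1), C k * t^k * (t-1)^(2*(n-k))
      = t^(2*n+1) + 1 := by
  intro t
  have h1 : ∑ k ∈ Finset.range (n+1), C k * t^k * (t-1)^(2*(n-k))
      = ∑ m ∈ Finset.range (2*n+1), (-t)^m := by
    rw [← key (-t)]
    refine Finset.sum_congr rfl fun ℓ hℓ => ?_
    have e1 : (-1:ℝ)^ℓ * (-t)^ℓ = t^ℓ := by
      rw [← mul_pow]; norm_num
    rw [pow_mul, pow_mul, show ((-t:ℝ)+1)^2 = (t-1)^2 from by ring, ← e1]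
    ring
  rw [h1]
  have h2 := geom_sum_mul (-t) (2*n+1)
  have h3 : (-t)^(2*n+1) = -t^(2*n+1) := Odd.neg_pow ⟨n, by ring⟩ t
  rw [h3] at h2
  nlinarith [h2]

/-- Separability identity for the generalized Stark-type potential: with the coefficients
`C_k` defined by `C₀ = 1`, `C_k = (-1)^k - Σ_{ℓ=0}^{k-1} (-1)^(k-ℓ) binom(2n-2ℓ, k-ℓ) C_ℓ`,
under the Levi-Civita substitution `q₁ = z₁² - z₂²`, `q₂ = 2 z₁ z₂` one has
`(z₁² + z₂²) Σ_{k=0}^{n} (C_k/4^k) (z₁²-z₂²)^(2(n-k)) (2z₁z₂)^(2k) = z₁^(4n+2) + z₂^(4n+2)`. -/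
theorem stmt_17 (n : ℕ) (hn : 1 ≤ n)
    (C : ℕ → ℝ) (hC0 : C 0 = 1)
    (hC : ∀ k : ℕ, 1 ≤ k → k ≤ n →
      C k = (-1 : ℝ) ^ k - ∑ ℓ ∈ Finset.range k,
        (-1 : ℝ) ^ (k - ℓ) * (Nat.choose (2 * n - 2 * ℓ) (k - ℓ) : ℝ) * C ℓ) :
    ∀ z₁ z₂ : ℝ,
      (z₁ ^ 2 + z₂ ^ 2) * ∑ k ∈ Finset.range (n + 1),
        (C k / 4 ^ k) * (z₁ ^ 2 - z₂ ^ 2) ^ (2 * (n - k)) * (2 * z₁ * z₂) ^ (2 * k) =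
      z₁ ^ (4 * n + 2) + z₂ ^ (4 * n + 2) := by
  have hf := stark_hf n C (stark_key n C (stark_coeff n C (stark_step1 n C hC0 hC)))
  intro z₁ z₂
  have hsum : ∀ k ∈ Finset.range (n+1),
      (C k / 4 ^ k) * (z₁ ^ 2 - z₂ ^ 2) ^ (2 * (n - k)) * (2 * z₁ * z₂) ^ (2 * k)
      = C k * (z₁^2 - z₂^2)^(2*(n-k)) * (z₁^2 * z₂^2)^k := by
    intro k _
    have h4 : (4:ℝ)^k ≠ 0 := by positivity
    rw [pow_mul (2*z₁*z₂) 2 k, show (2*z₁*z₂)^2 = 4*(z₁^2*z₂^2) from by ring, mul_pow]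
    field_simp
  rw [Finset.sum_congr rfl hsum,
    show 4*n+2 = 2*(2*n+1) from by ring, pow_mul, pow_mul]
  rcases eq_or_ne z₂ 0 with h0 | h0
  · subst h0
    rw [Finset.sum_eq_single_of_mem 0 (Finset.mem_range.2 (by omega))
      (by intro k _ hk0
          rw [show z₁^2 * (0:ℝ)^2 = 0 from by ring, zero_pow hk0, mul_zero])]
    rw [hC0]
    rw [show (0:ℝ)^2 = 0 from by ring]
    simp only [Nat.sub_zero, pow_zero, mul_one, one_mul, sub_zero, add_zero]
    rw [zero_pow (by omega), add_zero, ← pow_succ']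
  · set x := z₁^2 with hx
    set y := z₂^2 with hy
    have hyne : y ≠ 0 := pow_ne_zero 2 h0
    have hf' := hf (x/y)
    have lhs_eq : (x + y) * ∑ k ∈ Finset.range (n+1),
        C k * (x - y)^(2*(n-k)) * (x*y)^k
        = y^(2*n+1) * ((x/y + 1) * ∑ k ∈ Finset.range (n+1),
            C k * (x/y)^k * (x/y - 1)^(2*(n-k))) := by
      have hterm : ∀ k ∈ Finset.range (n+1),
          y^(2*n) * (C k * (x/y)^k * (x/y - 1)^(2*(n-k)))
          = C k * (x - y)^(2*(n-k)) * (x*y)^k := by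
        intro k hk
        simp only [Finset.mem_range] at hk
        rw [show x/y - 1 = (x-y)/y from by field_simp, div_pow, div_pow,
          show 2*n = 2*(n-k) + 2*k from by omega, pow_add]
        field_simp
        ring
      calc (x + y) * ∑ k ∈ Finset.range (n+1), C k * (x - y)^(2*(n-k)) * (x*y)^k
          = (x + y) * ∑ k ∈ Finset.range (n+1),
              y^(2*n) * (C k * (x/y)^k * (x/y - 1)^(2*(n-k))) := by
            rw [Finset.sum_congr rfl hterm]
        _ = (y * (x/y + 1)) * (y^(2*n) * ∑ k ∈ Finset.range (n+1),
              C k * (x/y)^k * (x/y - 1)^(2*(n-k))) := by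
            rw [← Finset.mul_sum, show y * (x/y + 1) = x + y from by field_simp]
        _ = y^(2*n+1) * ((x/y + 1) * ∑ k ∈ Finset.range (n+1),
              C k * (x/y)^k * (x/y - 1)^(2*(n-k))) := by ring
    rw [lhs_eq, hf', mul_add, mul_one, ← mul_pow,
      show y * (x/y) = x from by field_simp]
end
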